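/- arXiv:2501.12915 — 3 statements merged into one kernel-verified Lean document; each statement's English description precedes it below -/
import Mathlib

section
/- For every V ∈ 𝔤ₙ(λ), the Nomizu operator A_V of the oscillator algebra is given in invariant form by A_V Z = (1/2) η(V) φ(Z) + (1/2) η(Z) φ(V) − θ(Z) E_λ φ(V) + (1/2) g(φ(V), Z) ξ for all Z ∈ 𝔤ₙ(λ). -/
/-!
Written with `φ`, `F = E_λ ∘ φ`, `η` and `θ`, the bracket of `𝔤ₙ(λ)` reads
`[X, Y] = g(φX, Y) ξ + θ(X) FY − θ(Y) FX`, as one checks on basis vectors. Both `φ` and `F` are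
skew-adjoint, so when this is substituted into the Koszul formula for `2 g(∇_Z V, W)` the terms
carrying `θ(V)` and `θ(W)` cancel, and what remains is `−2 g(A_V Z, W)` for the stated `A_V Z`.
-/

open scoped RealInnerProductSpace
open Finset

noncomputable section

/-- The underlying inner product space of the oscillator algebra `𝔤ₙ(λ)`:
a `(2n+2)`-dimensional real inner product space. -/
abbrev Osc (n : ℕ) := EuclideanSpace ℝ (Fin (2*n+2))

/-- The basis vectors `e₁, …, eₙ`. -/
def oe (n : ℕ) (i : Fin n) : Osc n :=
  EuclideanSpace.single ⟨i.1, by have := i.2; omega⟩ 1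

/-- The basis vectors `e_{n+1}, …, e_{2n}`. -/
def oE (n : ℕ) (i : Fin n) : Osc n :=
  EuclideanSpace.single ⟨n + i.1, by have := i.2; omega⟩ 1

/-- The basis vector `ξ`. -/
def oXi (n : ℕ) : Osc n := EuclideanSpace.single ⟨2*n, by omega⟩ 1

/-- The basis vector `ζ`. -/
def oZeta (n : ℕ) : Osc n := EuclideanSpace.single ⟨2*n+1, by omega⟩ 1

/-- `br` is the Lie bracket of the oscillator algebra `𝔤ₙ(λ)`: the bilinear map
determined by `[eᵢ, e_{n+j}] = δᵢⱼ ξ`, `[ζ, eⱼ] = λⱼ e_{n+j}`, `[ζ, e_{n+j}] = −λⱼ eⱼ`,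
all other brackets of basis vectors being zero. -/
structure IsOscBracket (n : ℕ) (lam : Fin n → ℝ)
    (br : Osc n →ₗ[ℝ] Osc n →ₗ[ℝ] Osc n) : Prop where
  anti : ∀ X Y : Osc n, br X Y = - br Y X
  ee : ∀ i j : Fin n, br (oe n i) (oe n j) = 0
  eE : ∀ i j : Fin n, br (oe n i) (oE n j) = if i = j then oXi n else 0
  EE : ∀ i j : Fin n, br (oE n i) (oE n j) = 0
  exi : ∀ i : Fin n, br (oe n i) (oXi n) = 0
  Exi : ∀ i : Fin n, br (oE n i) (oXi n) = 0
  zee : ∀ j : Fin n, br (oZeta n) (oe n j) = lam j • oE n j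
  zeE : ∀ j : Fin n, br (oZeta n) (oE n j) = - (lam j • oe n j)
  xize : br (oXi n) (oZeta n) = 0

/-- `nab` is the Levi-Civita connection of the left-invariant metric (evaluated on
left-invariant fields): the bilinear map determined by the Koszul formula
`2 g(∇_X Y, Z) = g([X,Y], Z) − g([Y,Z], X) + g([Z,X], Y)`. -/
def IsLeviCivita (n : ℕ) (br nab : Osc n →ₗ[ℝ] Osc n →ₗ[ℝ] Osc n) : Prop :=
  ∀ X Y Z : Osc n,
    2 * ⟪nab X Y, Z⟫ = ⟪br X Y, Z⟫ - ⟪br Y Z, X⟫ + ⟪br Z X, Y⟫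

/-- The Nomizu operator `A_V X = −∇_X V`. -/
def nomizu {n : ℕ} (nab : Osc n →ₗ[ℝ] Osc n →ₗ[ℝ] Osc n) (V X : Osc n) : Osc n :=
  -(nab X V)

/-- The covariant derivative of the Nomizu operator:
`(∇_X A_V) Y = ∇_X (A_V Y) − A_V (∇_X Y)`. -/
def covNomizu {n : ℕ} (nab : Osc n →ₗ[ℝ] Osc n →ₗ[ℝ] Osc n) (V X Y : Osc n) : Osc n :=
  nab X (nomizu nab V Y) - nomizu nab V (nab X Y)

/-- The curvature tensor `R(X,Y)Z = ∇_X ∇_Y Z − ∇_Y ∇_X Z − ∇_{[X,Y]} Z`. -/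
def curvR {n : ℕ} (br nab : Osc n →ₗ[ℝ] Osc n →ₗ[ℝ] Osc n) (X Y Z : Osc n) : Osc n :=
  nab X (nab Y Z) - nab Y (nab X Z) - nab (br X Y) Z

/-- A unit vector `V ∈ 𝔤ₙ(λ)` is a *minimal* unit vector field if there is an orthonormal
basis `u₁, …, u_{2n+2}` of eigenvectors of `A_Vᵀ A_V` (the eigenvector condition being
expressed as `g(A_V W, A_V uᵢ) = σᵢ² g(W, uᵢ)` for all `W`) with eigenvalues `σᵢ²` such that
`Σᵢ ((∇_{uᵢ} A_V)uᵢ + A_V R(V, A_V uᵢ)uᵢ)/(1 + σᵢ²) = (Σᵢ σᵢ²/(1 + σᵢ²)) V`. -/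
def IsMinimal {n : ℕ} (br nab : Osc n →ₗ[ℝ] Osc n →ₗ[ℝ] Osc n) (V : Osc n) : Prop :=
  ∃ (u : Fin (2*n+2) → Osc n) (σ : Fin (2*n+2) → ℝ),
    (∀ i j, ⟪u i, u j⟫ = if i = j then 1 else 0) ∧
    (∀ i, ∀ W : Osc n,
      ⟪nomizu nab V W, nomizu nab V (u i)⟫ = (σ i)^2 * ⟪W, u i⟫) ∧
    (∑ i, (1 + (σ i)^2)⁻¹ •
        (covNomizu nab V (u i) (u i) +
          nomizu nab V (curvR br nab V (nomizu nab V (u i)) (u i))))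
      = (∑ i, (σ i)^2 / (1 + (σ i)^2)) • V

/-- The operator `φ` with `φ eᵢ = e_{n+i}`, `φ e_{n+i} = −eᵢ`, `φ ξ = φ ζ = 0`. -/
structure IsPhi (n : ℕ) (phi : Osc n →ₗ[ℝ] Osc n) : Prop where
  he : ∀ i : Fin n, phi (oe n i) = oE n i
  hE : ∀ i : Fin n, phi (oE n i) = - oe n i
  hxi : phi (oXi n) = 0
  hzeta : phi (oZeta n) = 0

/-- The operator `E_λ` with `E_λ eᵢ = λᵢ eᵢ`, `E_λ e_{n+i} = λᵢ e_{n+i}`, `E_λ ξ = E_λ ζ = 0`. -/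
structure IsElam (n : ℕ) (lam : Fin n → ℝ) (El : Osc n →ₗ[ℝ] Osc n) : Prop where
  he : ∀ i : Fin n, El (oe n i) = lam i • oe n i
  hE : ∀ i : Fin n, El (oE n i) = lam i • oE n i
  hxi : El (oXi n) = 0
  hzeta : El (oZeta n) = 0

section InvariantBracket

variable {E : Type*} [NormedAddCommGroup E] [InnerProductSpace ℝ E]

def invariantBracket (phi F : E →ₗ[ℝ] E) (ξ ζ : E) : E →ₗ[ℝ] E →ₗ[ℝ] E :=
  LinearMap.mk₂ ℝ (fun X Y => ⟪phi X, Y⟫ • ξ + ⟪X, ζ⟫ • F Y - ⟪Y, ζ⟫ • F X)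
    (fun _ _ _ => by simp only [map_add, inner_add_left]; module)
    (fun _ _ _ => by simp only [map_smul, real_inner_smul_left]; module)
    (fun _ _ _ => by simp only [map_add, inner_add_left, inner_add_right]; module)
    (fun _ _ _ => by simp only [map_smul, real_inner_smul_left, real_inner_smul_right]; module)

theorem invariantBracket_apply (phi F : E →ₗ[ℝ] E) (ξ ζ X Y : E) :
    invariantBracket phi F ξ ζ X Y = ⟪phi X, Y⟫ • ξ + ⟪X, ζ⟫ • F Y - ⟪Y, ζ⟫ • F X :=
  rfl

theorem neg_koszul_invariantBracket {phi F : E →ₗ[ℝ] E} {ξ ζ : E} {nab : E → E → E}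
    (hphi : ∀ X Y, ⟪phi X, Y⟫ = -⟪X, phi Y⟫) (hF : ∀ X Y, ⟪F X, Y⟫ = -⟪X, F Y⟫)
    (hlc : ∀ X Y Z, 2 * ⟪nab X Y, Z⟫ = ⟪invariantBracket phi F ξ ζ X Y, Z⟫
      - ⟪invariantBracket phi F ξ ζ Y Z, X⟫ + ⟪invariantBracket phi F ξ ζ Z X, Y⟫)
    (V Z : E) :
    -nab Z V = ((1/2) * ⟪V, ξ⟫) • phi Z + ((1/2) * ⟪Z, ξ⟫) • phi V
      - ⟪Z, ζ⟫ • F V + ((1/2) * ⟪phi V, Z⟫) • ξ := by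
  refine ext_inner_right ℝ fun W => ?_
  have hk := hlc Z V W
  simp only [invariantBracket_apply, inner_add_left, inner_sub_left, inner_neg_left,
    real_inner_smul_left] at hk ⊢
  rw [hphi Z V, hphi W Z, hF W Z, hF Z V, hF W V, real_inner_comm (phi V) Z,
    real_inner_comm Z ξ, real_inner_comm (F Z) W, real_inner_comm (phi Z) W, real_inner_comm V ξ,
    real_inner_comm (F V) Z, real_inner_comm (F V) W] at hk
  linarith

end InvariantBracket

theorem EuclideanSpace.inner_single_one_single_one {m : ℕ} (a b : Fin m) :
    ⟪EuclideanSpace.single a (1 : ℝ), EuclideanSpace.single b 1⟫ = if a = b then 1 else 0 :=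
  orthonormal_iff_ite.mp EuclideanSpace.orthonormal_single a b

theorem EuclideanSpace.inner_single_one_of_val_ne {m : ℕ} {a b : Fin m} (h : (a : ℕ) ≠ b) :
    ⟪EuclideanSpace.single a (1 : ℝ), EuclideanSpace.single b 1⟫ = 0 := by
  rw [inner_single_one_single_one, if_neg (Fin.val_ne_iff.mp h)]

namespace Osc

variable {n : ℕ}

def frame (n : ℕ) : Set (Osc n) := Set.range (oe n) ∪ Set.range (oE n) ∪ {oXi n, oZeta n}

theorem single_mem_frame (k : Fin (2*n+2)) : EuclideanSpace.single k (1 : ℝ) ∈ frame n := by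
  obtain ⟨k, hk⟩ := k
  rcases lt_or_ge k n with h | h
  · exact Or.inl (Or.inl ⟨⟨k, h⟩, rfl⟩)
  rcases lt_or_ge k (2*n) with h' | h'
  · refine Or.inl (Or.inr ⟨⟨k - n, by omega⟩, ?_⟩)
    simp only [oE, Nat.add_sub_cancel' h]
  rcases (show k = 2*n ∨ k = 2*n+1 by omega) with rfl | rfl
  · exact Or.inr (Or.inl rfl)
  · exact Or.inr (Or.inr rfl)

theorem span_frame : Submodule.span ℝ (frame n) = ⊤ := by
  refine eq_top_iff.2 <| (EuclideanSpace.basisFun _ ℝ).toBasis.span_eq.ge.trans <|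
    Submodule.span_mono ?_
  rintro _ ⟨k, rfl⟩
  simpa using single_mem_frame k

theorem bilin_ext_frame {M : Type*} [AddCommGroup M] [Module ℝ M]
    {B B' : Osc n →ₗ[ℝ] Osc n →ₗ[ℝ] M}
    (h : ∀ x ∈ frame n, ∀ y ∈ frame n, B x y = B' x y) : B = B' :=
  LinearMap.ext_on span_frame fun x hx => LinearMap.ext_on span_frame (h x hx)

@[simp] theorem inner_oe_oe (i j : Fin n) : ⟪oe n i, oe n j⟫ = if i = j then 1 else 0 := by
  simp [oe, EuclideanSpace.inner_single_one_single_one, Fin.ext_iff]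

@[simp] theorem inner_oE_oE (i j : Fin n) : ⟪oE n i, oE n j⟫ = if i = j then 1 else 0 := by
  simp [oE, EuclideanSpace.inner_single_one_single_one, Fin.ext_iff]

@[simp] theorem inner_oe_oE (i j : Fin n) : ⟪oe n i, oE n j⟫ = 0 :=
  EuclideanSpace.inner_single_one_of_val_ne (by dsimp only; omega)

@[simp] theorem inner_oE_oe (i j : Fin n) : ⟪oE n i, oe n j⟫ = 0 :=
  EuclideanSpace.inner_single_one_of_val_ne (by dsimp only; omega)

@[simp] theorem inner_oe_oXi (i : Fin n) : ⟪oe n i, oXi n⟫ = 0 :=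
  EuclideanSpace.inner_single_one_of_val_ne (by dsimp only; omega)

@[simp] theorem inner_oXi_oe (i : Fin n) : ⟪oXi n, oe n i⟫ = 0 :=
  EuclideanSpace.inner_single_one_of_val_ne (by dsimp only; omega)

@[simp] theorem inner_oE_oXi (i : Fin n) : ⟪oE n i, oXi n⟫ = 0 :=
  EuclideanSpace.inner_single_one_of_val_ne (by dsimp only; omega)

@[simp] theorem inner_oXi_oE (i : Fin n) : ⟪oXi n, oE n i⟫ = 0 :=
  EuclideanSpace.inner_single_one_of_val_ne (by dsimp only; omega)

@[simp] theorem inner_oe_oZeta (i : Fin n) : ⟪oe n i, oZeta n⟫ = 0 :=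
  EuclideanSpace.inner_single_one_of_val_ne (by dsimp only; omega)

@[simp] theorem inner_oZeta_oe (i : Fin n) : ⟪oZeta n, oe n i⟫ = 0 :=
  EuclideanSpace.inner_single_one_of_val_ne (by dsimp only; omega)

@[simp] theorem inner_oE_oZeta (i : Fin n) : ⟪oE n i, oZeta n⟫ = 0 :=
  EuclideanSpace.inner_single_one_of_val_ne (by dsimp only; omega)

@[simp] theorem inner_oZeta_oE (i : Fin n) : ⟪oZeta n, oE n i⟫ = 0 :=
  EuclideanSpace.inner_single_one_of_val_ne (by dsimp only; omega)

@[simp] theorem inner_oXi_oZeta : ⟪oXi n, oZeta n⟫ = 0 :=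
  EuclideanSpace.inner_single_one_of_val_ne (by dsimp only; omega)

@[simp] theorem inner_oZeta_oXi : ⟪oZeta n, oXi n⟫ = 0 :=
  EuclideanSpace.inner_single_one_of_val_ne (by dsimp only; omega)

@[simp] theorem norm_oXi : ‖oXi n‖ = 1 := by
  simp [oXi]

@[simp] theorem norm_oZeta : ‖oZeta n‖ = 1 := by
  simp [oZeta]

theorem inner_map_left_eq_neg {T : Osc n →ₗ[ℝ] Osc n}
    (h : ∀ x ∈ frame n, ∀ y ∈ frame n, ⟪T x, y⟫ = -⟪x, T y⟫) (X Y : Osc n) :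
    ⟪T X, Y⟫ = -⟪X, T Y⟫ :=
  LinearMap.congr_fun₂ (bilin_ext_frame (B := (innerₗ (Osc n)).compl₁₂ T LinearMap.id)
    (B' := -(innerₗ (Osc n)).compl₁₂ LinearMap.id T) h) X Y

end Osc

section OscillatorStructure

variable {n : ℕ} {lam : Fin n → ℝ} {phi El : Osc n →ₗ[ℝ] Osc n}

theorem IsPhi.inner_map_left (hphi : IsPhi n phi) (X Y : Osc n) :
    ⟪phi X, Y⟫ = -⟪X, phi Y⟫ := by
  refine Osc.inner_map_left_eq_neg ?_ X Y
  rintro _ ((⟨i, rfl⟩ | ⟨i, rfl⟩) | rfl | rfl) _ ((⟨j, rfl⟩ | ⟨j, rfl⟩) | rfl | rfl) <;>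
    simp [hphi.he, hphi.hE, hphi.hxi, hphi.hzeta]

theorem IsElam.inner_comp_left (hEl : IsElam n lam El) (hphi : IsPhi n phi) (X Y : Osc n) :
    ⟪(El ∘ₗ phi) X, Y⟫ = -⟪X, (El ∘ₗ phi) Y⟫ := by
  refine Osc.inner_map_left_eq_neg ?_ X Y
  rintro _ ((⟨i, rfl⟩ | ⟨i, rfl⟩) | rfl | rfl) _ ((⟨j, rfl⟩ | ⟨j, rfl⟩) | rfl | rfl) <;>
    simp +contextual [hphi.he, hphi.hE, hphi.hxi, hphi.hzeta, hEl.he, hEl.hE,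
      real_inner_smul_left, real_inner_smul_right]

variable {br : Osc n →ₗ[ℝ] Osc n →ₗ[ℝ] Osc n}

theorem IsOscBracket.apply_self (hbr : IsOscBracket n lam br) (X : Osc n) : br X X = 0 := by
  have h := hbr.anti X X
  rw [eq_neg_iff_add_eq_zero, ← two_smul ℝ] at h
  exact (smul_eq_zero.mp h).resolve_left two_ne_zero

theorem IsOscBracket.eq_invariantBracket (hbr : IsOscBracket n lam br) (hphi : IsPhi n phi)
    (hEl : IsElam n lam El) : br = invariantBracket phi (El ∘ₗ phi) (oXi n) (oZeta n) := by
  refine Osc.bilin_ext_frame ?_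
  rintro _ ((⟨i, rfl⟩ | ⟨i, rfl⟩) | rfl | rfl) _ ((⟨j, rfl⟩ | ⟨j, rfl⟩) | rfl | rfl) <;>
    first
    | simp [invariantBracket_apply, hbr.apply_self, hbr.ee, hbr.eE, hbr.EE, hbr.exi, hbr.Exi,
        hbr.zee, hbr.zeE, hbr.xize, hphi.he, hphi.hE, hphi.hxi, hphi.hzeta, hEl.he, hEl.hE]; done
    | rw [hbr.anti]
      simp [invariantBracket_apply, hbr.eE, hbr.exi, hbr.Exi, hbr.zee, hbr.zeE, hbr.xize,
        hphi.he, hphi.hE, hphi.hxi, hphi.hzeta, hEl.he, hEl.hE, eq_comm]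

end OscillatorStructure

theorem nomizu_invariant_form_general (n : ℕ) (lam : Fin n → ℝ)
    (br nab : Osc n →ₗ[ℝ] Osc n →ₗ[ℝ] Osc n)
    (hbr : IsOscBracket n lam br) (hlc : IsLeviCivita n br nab)
    (phi El : Osc n →ₗ[ℝ] Osc n) (hphi : IsPhi n phi) (hEl : IsElam n lam El) :
    ∀ V Z : Osc n,
      nomizu nab V Z =
        ((1/2) * ⟪V, oXi n⟫) • phi Z + ((1/2) * ⟪Z, oXi n⟫) • phi V
          - ⟪Z, oZeta n⟫ • El (phi V) + ((1/2) * ⟪phi V, Z⟫) • oXi n := by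
  intro V Z
  rw [IsLeviCivita, hbr.eq_invariantBracket hphi hEl] at hlc
  exact neg_koszul_invariantBracket hphi.inner_map_left (hEl.inner_comp_left hphi) hlc V Z

/-- Lemma 1: invariant form of the Nomizu operator on the oscillator group:
`A_V Z = ½ η(V) φ(Z) + ½ η(Z) φ(V) − θ(Z) E_λ φ(V) + ½ g(φ(V), Z) ξ`. -/
theorem nomizu_invariant_form (n : ℕ) (hn : 1 ≤ n) (lam : Fin n → ℝ)
    (br nab : Osc n →ₗ[ℝ] Osc n →ₗ[ℝ] Osc n)
    (hbr : IsOscBracket n lam br) (hlc : IsLeviCivita n br nab)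
    (phi El : Osc n →ₗ[ℝ] Osc n) (hphi : IsPhi n phi) (hEl : IsElam n lam El) :
    ∀ V Z : Osc n,
      nomizu nab V Z =
        ((1/2) * ⟪V, oXi n⟫) • phi Z + ((1/2) * ⟪Z, oXi n⟫) • phi V
          - ⟪Z, oZeta n⟫ • El (phi V) + ((1/2) * ⟪phi V, Z⟫) • oXi n :=
  nomizu_invariant_form_general n lam br nab hbr hlc phi El hphi hEl
end
end

section
/- Let V = Σᵢ (aᵢ eᵢ + a_{n+i} e_{n+i}) be a unit vector of the oscillator algebra 𝔤ₙ(λ). Then the restriction of A_Vᵀ A_V to the invariant 2-plane span(ξ, ζ) has characteristic polynomial μ² − (1/4 + Σᵢ λᵢ²(aᵢ² + a_{n+i}²)) μ + (1/8) Σ_{i,j} (λᵢ − λⱼ)² (aᵢ² + a_{n+i}²)(aⱼ² + a_{n+j}²). -/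
open scoped RealInnerProductSpace
open Finset

noncomputable section

/-! For horizontal `V = Σ aᵢ eᵢ + bᵢ e_{n+i}` the Koszul formula gives `A_V eᵢ = -(bᵢ/2) ξ`,
`A_V e_{n+i} = (aᵢ/2) ξ`, `A_V ξ = ½ Σ (-bᵢ eᵢ + aᵢ e_{n+i})` and
`A_V ζ = Σ λᵢ (bᵢ eᵢ - aᵢ e_{n+i})`. Since `A_V` maps the horizontal space into `ℝ ξ`, the operator
`A_Vᵀ A_V` preserves `span(ξ, ζ)`, where its matrix is the Gram matrix of `A_V ξ, A_V ζ`. With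
`wᵢ = aᵢ² + bᵢ²` and `Σ wᵢ = 1` its entries are `¼`, `-½ Σ λᵢ wᵢ` and `Σ λᵢ² wᵢ`, so its trace is
`¼ + Σ λᵢ² wᵢ` and its determinant `¼ (Σ wᵢ · Σ λᵢ² wᵢ - (Σ λᵢ wᵢ)²) = ⅛ Σ (λᵢ - λⱼ)² wᵢ wⱼ`. -/

lemma sum_sum_sub_sq_mul_mul {ι R : Type*} [CommRing R] (s : Finset ι) (x w : ι → R) :
    ∑ i ∈ s, ∑ j ∈ s, (x i - x j) ^ 2 * w i * w j
      = 2 * ((∑ i ∈ s, w i) * ∑ i ∈ s, x i ^ 2 * w i - (∑ i ∈ s, x i * w i) ^ 2) := by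
  have row_sum : ∀ i, ∑ j ∈ s, (x i - x j) ^ 2 * w i * w j
      = x i ^ 2 * w i * ∑ j ∈ s, w j - 2 * (x i * w i) * ∑ j ∈ s, x j * w j
        + w i * ∑ j ∈ s, x j ^ 2 * w j := by
    intro i
    simp only [mul_sum, ← sum_sub_distrib, ← sum_add_distrib]
    exact sum_congr rfl fun j _ => by ring
  rw [sum_congr rfl fun i _ => row_sum i, sum_add_distrib, sum_sub_distrib, ← sum_mul,
    ← sum_mul, ← sum_mul, ← mul_sum]
  ring

lemma inner_single_mk_one_of_ne {m k l : ℕ} {hk : k < m} {hl : l < m} (h : k ≠ l) :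
    ⟪EuclideanSpace.single (⟨k, hk⟩ : Fin m) (1 : ℝ), EuclideanSpace.single ⟨l, hl⟩ 1⟫ = 0 :=
  EuclideanSpace.orthonormal_single.2 (Fin.ne_of_val_ne h)

section Oscillator

variable {n : ℕ}

section Basis

@[simp] lemma inner_oe_oe (i j : Fin n) : ⟪oe n i, oe n j⟫ = if i = j then 1 else 0 := by
  simp [oe, EuclideanSpace.inner_single_left, Fin.ext_iff]
@[simp] lemma inner_oE_oE (i j : Fin n) : ⟪oE n i, oE n j⟫ = if i = j then 1 else 0 := by
  simp [oE, EuclideanSpace.inner_single_left, Fin.ext_iff]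
@[simp] lemma norm_oXi : ‖oXi n‖ = 1 := by simp [oXi]
@[simp] lemma norm_oZeta : ‖oZeta n‖ = 1 := by simp [oZeta]

@[simp] lemma inner_oe_oE (i j : Fin n) : ⟪oe n i, oE n j⟫ = 0 :=
  inner_single_mk_one_of_ne (by omega)
@[simp] lemma inner_oE_oe (i j : Fin n) : ⟪oE n i, oe n j⟫ = 0 :=
  inner_single_mk_one_of_ne (by omega)
@[simp] lemma inner_oe_oXi (i : Fin n) : ⟪oe n i, oXi n⟫ = 0 :=
  inner_single_mk_one_of_ne (by omega)
@[simp] lemma inner_oXi_oe (i : Fin n) : ⟪oXi n, oe n i⟫ = 0 :=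
  inner_single_mk_one_of_ne (by omega)
@[simp] lemma inner_oE_oXi (i : Fin n) : ⟪oE n i, oXi n⟫ = 0 :=
  inner_single_mk_one_of_ne (by omega)
@[simp] lemma inner_oXi_oE (i : Fin n) : ⟪oXi n, oE n i⟫ = 0 :=
  inner_single_mk_one_of_ne (by omega)
@[simp] lemma inner_oe_oZeta (i : Fin n) : ⟪oe n i, oZeta n⟫ = 0 :=
  inner_single_mk_one_of_ne (by omega)
@[simp] lemma inner_oZeta_oe (i : Fin n) : ⟪oZeta n, oe n i⟫ = 0 :=
  inner_single_mk_one_of_ne (by omega)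
@[simp] lemma inner_oE_oZeta (i : Fin n) : ⟪oE n i, oZeta n⟫ = 0 :=
  inner_single_mk_one_of_ne (by omega)
@[simp] lemma inner_oZeta_oE (i : Fin n) : ⟪oZeta n, oE n i⟫ = 0 :=
  inner_single_mk_one_of_ne (by omega)
@[simp] lemma inner_oXi_oZeta : ⟪oXi n, oZeta n⟫ = 0 := inner_single_mk_one_of_ne (by omega)
@[simp] lemma inner_oZeta_oXi : ⟪oZeta n, oXi n⟫ = 0 := inner_single_mk_one_of_ne (by omega)

lemma ext_of_inner_basis {W W' : Osc n}
    (he : ∀ i, ⟪W, oe n i⟫ = ⟪W', oe n i⟫) (hE : ∀ i, ⟪W, oE n i⟫ = ⟪W', oE n i⟫)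
    (hξ : ⟪W, oXi n⟫ = ⟪W', oXi n⟫) (hζ : ⟪W, oZeta n⟫ = ⟪W', oZeta n⟫) : W = W' := by
  have key : ∀ k : Fin (2*n+2),
      ⟪W, EuclideanSpace.single k (1:ℝ)⟫ = ⟪W', EuclideanSpace.single k 1⟫ := by
    rintro ⟨k, hk⟩
    obtain h | h | rfl | rfl : k < n ∨ (n ≤ k ∧ k < 2*n) ∨ k = 2*n ∨ k = 2*n+1 := by omega
    · exact he ⟨k, h⟩
    · simpa [oE, Nat.add_sub_cancel' h.1] using hE ⟨k - n, by omega⟩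
    · exact hξ
    · exact hζ
  ext k
  simpa [EuclideanSpace.inner_single_right] using key k

end Basis

section Horizontal

def horiz (n : ℕ) (α β : Fin n → ℝ) : Osc n := ∑ i, (α i • oe n i + β i • oE n i)

variable (α β : Fin n → ℝ)

@[simp] lemma inner_horiz_oe (k : Fin n) : ⟪horiz n α β, oe n k⟫ = α k := by
  simp [horiz, sum_inner, inner_add_left, real_inner_smul_left]
@[simp] lemma inner_horiz_oE (k : Fin n) : ⟪horiz n α β, oE n k⟫ = β k := by
  simp [horiz, sum_inner, inner_add_left, real_inner_smul_left]
@[simp] lemma inner_horiz_oXi : ⟪horiz n α β, oXi n⟫ = 0 := by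
  simp [horiz, sum_inner, inner_add_left, real_inner_smul_left]
@[simp] lemma inner_horiz_oZeta : ⟪horiz n α β, oZeta n⟫ = 0 := by
  simp [horiz, sum_inner, inner_add_left, real_inner_smul_left]
@[simp] lemma inner_oe_horiz (k : Fin n) : ⟪oe n k, horiz n α β⟫ = α k := by
  rw [real_inner_comm, inner_horiz_oe]
@[simp] lemma inner_oE_horiz (k : Fin n) : ⟪oE n k, horiz n α β⟫ = β k := by
  rw [real_inner_comm, inner_horiz_oE]
@[simp] lemma inner_oXi_horiz : ⟪oXi n, horiz n α β⟫ = 0 := by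
  rw [real_inner_comm, inner_horiz_oXi]

lemma inner_horiz_horiz (γ δ : Fin n → ℝ) :
    ⟪horiz n α β, horiz n γ δ⟫ = ∑ i, (α i * γ i + β i * δ i) := by
  conv_lhs => rw [horiz]
  simp [sum_inner, inner_add_left, real_inner_smul_left]

lemma norm_horiz_sq : ‖horiz n α β‖ ^ 2 = ∑ i, (α i ^ 2 + β i ^ 2) := by
  rw [← real_inner_self_eq_norm_sq, inner_horiz_horiz]
  simp only [sq]

end Horizontal

namespace IsOscBracket

variable {lam : Fin n → ℝ} {br : Osc n →ₗ[ℝ] Osc n →ₗ[ℝ] Osc n}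

lemma apply_self_s11 (hbr : IsOscBracket n lam br) (X : Osc n) : br X X = 0 := by
  have h := hbr.anti X X
  rwa [eq_neg_iff_add_eq_zero, ← two_smul ℝ, smul_eq_zero, or_iff_right two_ne_zero] at h

lemma oE_oe (hbr : IsOscBracket n lam br) (i j : Fin n) :
    br (oE n i) (oe n j) = if j = i then -oXi n else 0 := by
  rw [hbr.anti, hbr.eE]; split_ifs <;> simp

lemma oXi_oe (hbr : IsOscBracket n lam br) (i : Fin n) : br (oXi n) (oe n i) = 0 := by
  rw [hbr.anti, hbr.exi, neg_zero]

lemma oXi_oE (hbr : IsOscBracket n lam br) (i : Fin n) : br (oXi n) (oE n i) = 0 := by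
  rw [hbr.anti, hbr.Exi, neg_zero]

lemma oZeta_oXi (hbr : IsOscBracket n lam br) : br (oZeta n) (oXi n) = 0 := by
  rw [hbr.anti, hbr.xize, neg_zero]

lemma oe_oZeta (hbr : IsOscBracket n lam br) (j : Fin n) :
    br (oe n j) (oZeta n) = -(lam j • oE n j) := by
  rw [hbr.anti, hbr.zee]

lemma oE_oZeta (hbr : IsOscBracket n lam br) (j : Fin n) :
    br (oE n j) (oZeta n) = lam j • oe n j := by
  rw [hbr.anti, hbr.zeE, neg_neg]

variable (α β : Fin n → ℝ)

lemma horiz_oe (hbr : IsOscBracket n lam br) (k : Fin n) :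
    br (horiz n α β) (oe n k) = -(β k • oXi n) := by
  simp [horiz, hbr.ee, hbr.oE_oe]

lemma horiz_oE (hbr : IsOscBracket n lam br) (k : Fin n) :
    br (horiz n α β) (oE n k) = α k • oXi n := by
  simp [horiz, hbr.eE, hbr.EE]

lemma horiz_oXi (hbr : IsOscBracket n lam br) : br (horiz n α β) (oXi n) = 0 := by
  simp [horiz, hbr.exi, hbr.Exi]

lemma horiz_oZeta (hbr : IsOscBracket n lam br) :
    br (horiz n α β) (oZeta n) = horiz n (fun i => lam i * β i) (fun i => -(lam i * α i)) := by
  rw [horiz, map_sum, LinearMap.sum_apply, horiz]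
  refine sum_congr rfl fun i _ => ?_
  rw [map_add, map_smul, map_smul, LinearMap.add_apply, LinearMap.smul_apply,
    LinearMap.smul_apply, hbr.oe_oZeta, hbr.oE_oZeta]
  module

end IsOscBracket

section Nomizu

variable {lam : Fin n → ℝ} {br nab : Osc n →ₗ[ℝ] Osc n →ₗ[ℝ] Osc n}

lemma IsLeviCivita.inner_nomizu (hlc : IsLeviCivita n br nab)
    (hanti : ∀ X Y, br X Y = -br Y X) (V X Z : Osc n) :
    ⟪nomizu nab V X, Z⟫ = (⟪br V X, Z⟫ + ⟪br V Z, X⟫ + ⟪br X Z, V⟫) / 2 := by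
  have h := hlc X V Z
  rw [hanti X V, hanti Z X] at h
  simp only [nomizu, inner_neg_left] at h ⊢
  linarith

variable (a b : Fin n → ℝ)

lemma nomizu_oe (hbr : IsOscBracket n lam br) (hlc : IsLeviCivita n br nab) (k : Fin n) :
    nomizu nab (horiz n a b) (oe n k) = (-b k / 2) • oXi n := by
  refine ext_of_inner_basis (fun j => ?_) (fun j => ?_) ?_ ?_ <;>
    simp [hlc.inner_nomizu hbr.anti, hbr.horiz_oe, hbr.horiz_oE, hbr.horiz_oXi, hbr.horiz_oZeta,
      hbr.ee, hbr.eE, hbr.exi, hbr.oe_oZeta, real_inner_smul_left,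
      apply_ite (inner ℝ · (horiz n a b))]

lemma nomizu_oE (hbr : IsOscBracket n lam br) (hlc : IsLeviCivita n br nab) (k : Fin n) :
    nomizu nab (horiz n a b) (oE n k) = (a k / 2) • oXi n := by
  refine ext_of_inner_basis (fun j => ?_) (fun j => ?_) ?_ ?_ <;>
    simp [hlc.inner_nomizu hbr.anti, hbr.horiz_oe, hbr.horiz_oE, hbr.horiz_oXi, hbr.horiz_oZeta,
      hbr.oE_oe, hbr.EE, hbr.Exi, hbr.oE_oZeta, real_inner_smul_left,
      apply_ite (inner ℝ · (horiz n a b))]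

lemma nomizu_oXi (hbr : IsOscBracket n lam br) (hlc : IsLeviCivita n br nab) :
    nomizu nab (horiz n a b) (oXi n) = horiz n (fun i => -b i / 2) (fun i => a i / 2) := by
  refine ext_of_inner_basis (fun j => ?_) (fun j => ?_) ?_ ?_ <;>
    simp [hlc.inner_nomizu hbr.anti, hbr.horiz_oe, hbr.horiz_oE, hbr.horiz_oXi, hbr.horiz_oZeta,
      hbr.oXi_oe, hbr.oXi_oE, hbr.apply_self_s11, hbr.xize, real_inner_smul_left]

lemma nomizu_oZeta (hbr : IsOscBracket n lam br) (hlc : IsLeviCivita n br nab) :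
    nomizu nab (horiz n a b) (oZeta n)
      = horiz n (fun i => lam i * b i) (fun i => -(lam i * a i)) := by
  refine ext_of_inner_basis (fun j => ?_) (fun j => ?_) ?_ ?_ <;>
    simp [hlc.inner_nomizu hbr.anti, hbr.horiz_oe, hbr.horiz_oE, hbr.horiz_oXi, hbr.horiz_oZeta,
      hbr.zee, hbr.zeE, hbr.oZeta_oXi, hbr.apply_self_s11, real_inner_smul_left]

lemma adjoint_nomizu_apply_of_inner_oXi (hbr : IsOscBracket n lam br)
    (hlc : IsLeviCivita n br nab) {AT : Osc n → Osc n}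
    (hAT : ∀ X Y, ⟪nomizu nab (horiz n a b) X, Y⟫ = ⟪X, AT Y⟫) {Y : Osc n}
    (hY : ⟪oXi n, Y⟫ = 0) :
    AT Y = ⟪nomizu nab (horiz n a b) (oXi n), Y⟫ • oXi n
      + ⟪nomizu nab (horiz n a b) (oZeta n), Y⟫ • oZeta n := by
  refine ext_of_inner_basis (fun j => ?_) (fun j => ?_) ?_ ?_ <;>
    rw [real_inner_comm _ (AT Y), ← hAT] <;>
    simp [nomizu_oe a b hbr hlc, nomizu_oE a b hbr hlc, inner_add_left, real_inner_smul_left, hY]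

lemma inner_nomizu_oXi_nomizu_oXi (hbr : IsOscBracket n lam br) (hlc : IsLeviCivita n br nab) :
    ⟪nomizu nab (horiz n a b) (oXi n), nomizu nab (horiz n a b) (oXi n)⟫
      = (∑ i, (a i ^ 2 + b i ^ 2)) / 4 := by
  rw [nomizu_oXi a b hbr hlc, inner_horiz_horiz, sum_div]
  exact sum_congr rfl fun i _ => by ring

lemma inner_nomizu_oZeta_nomizu_oXi (hbr : IsOscBracket n lam br)
    (hlc : IsLeviCivita n br nab) :
    ⟪nomizu nab (horiz n a b) (oZeta n), nomizu nab (horiz n a b) (oXi n)⟫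
      = -(∑ i, lam i * (a i ^ 2 + b i ^ 2)) / 2 := by
  rw [nomizu_oXi a b hbr hlc, nomizu_oZeta a b hbr hlc, inner_horiz_horiz, ← sum_neg_distrib,
    sum_div]
  exact sum_congr rfl fun i _ => by ring

lemma inner_nomizu_oZeta_nomizu_oZeta (hbr : IsOscBracket n lam br)
    (hlc : IsLeviCivita n br nab) :
    ⟪nomizu nab (horiz n a b) (oZeta n), nomizu nab (horiz n a b) (oZeta n)⟫
      = ∑ i, lam i ^ 2 * (a i ^ 2 + b i ^ 2) := by
  rw [nomizu_oZeta a b hbr hlc, inner_horiz_horiz]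
  exact sum_congr rfl fun i _ => by ring

end Nomizu

end Oscillator

theorem ata_char_poly_general (n : ℕ) (lam : Fin n → ℝ)
    (br nab : Osc n →ₗ[ℝ] Osc n →ₗ[ℝ] Osc n)
    (hbr : IsOscBracket n lam br) (hlc : IsLeviCivita n br nab)
    (a b : Fin n → ℝ) (V : Osc n)
    (hV : V = ∑ i, (a i • oe n i + b i • oE n i)) (hVunit : ‖V‖ = 1)
    (AT : Osc n →ₗ[ℝ] Osc n)
    (hAT : ∀ X Y : Osc n, ⟪nomizu nab V X, Y⟫ = ⟪X, AT Y⟫) :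
    ∃ p q r s : ℝ,
      AT (nomizu nab V (oXi n)) = p • oXi n + q • oZeta n ∧
      AT (nomizu nab V (oZeta n)) = r • oXi n + s • oZeta n ∧
      ∀ μ : ℝ, (μ - p) * (μ - s) - q * r =
        μ^2 - ((1/4) + ∑ i, (lam i)^2 * ((a i)^2 + (b i)^2)) * μ
          + (1/8) * ∑ i, ∑ j, (lam i - lam j)^2 * ((a i)^2 + (b i)^2) * ((a j)^2 + (b j)^2) := by
  obtain rfl : V = horiz n a b := hV
  have hw : ∑ i, (a i ^ 2 + b i ^ 2) = 1 := by rw [← norm_horiz_sq, hVunit, one_pow]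
  refine ⟨_, _, _, _,
    adjoint_nomizu_apply_of_inner_oXi a b hbr hlc hAT
      (by rw [nomizu_oXi a b hbr hlc, inner_oXi_horiz]),
    adjoint_nomizu_apply_of_inner_oXi a b hbr hlc hAT
      (by rw [nomizu_oZeta a b hbr hlc, inner_oXi_horiz]),
    fun μ => ?_⟩
  rw [real_inner_comm (nomizu nab _ (oZeta n)) (nomizu nab _ (oXi n)),
    inner_nomizu_oXi_nomizu_oXi a b hbr hlc,
    inner_nomizu_oZeta_nomizu_oXi a b hbr hlc, inner_nomizu_oZeta_nomizu_oZeta a b hbr hlc,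
    sum_sum_sub_sq_mul_mul, hw]
  ring

/-- For a unit `V = Σᵢ (aᵢ eᵢ + a_{n+i} e_{n+i})`, the plane `span(ξ, ζ)` is invariant
under `A_Vᵀ A_V` and the restriction has characteristic polynomial
`μ² − (¼ + Σᵢ λᵢ²(aᵢ² + a_{n+i}²)) μ + ⅛ Σ_{i,j} (λᵢ − λⱼ)² (aᵢ² + a_{n+i}²)(aⱼ² + a_{n+j}²)`. -/
theorem ata_char_poly (n : ℕ) (hn : 1 ≤ n) (lam : Fin n → ℝ)
    (br nab : Osc n →ₗ[ℝ] Osc n →ₗ[ℝ] Osc n)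
    (hbr : IsOscBracket n lam br) (hlc : IsLeviCivita n br nab)
    (a b : Fin n → ℝ) (V : Osc n)
    (hV : V = ∑ i, (a i • oe n i + b i • oE n i)) (hVunit : ‖V‖ = 1)
    (AT : Osc n →ₗ[ℝ] Osc n)
    (hAT : ∀ X Y : Osc n, ⟪nomizu nab V X, Y⟫ = ⟪X, AT Y⟫) :
    ∃ p q r s : ℝ,
      AT (nomizu nab V (oXi n)) = p • oXi n + q • oZeta n ∧
      AT (nomizu nab V (oZeta n)) = r • oXi n + s • oZeta n ∧
      ∀ μ : ℝ, (μ - p) * (μ - s) - q * r =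
        μ^2 - ((1/4) + ∑ i, (lam i)^2 * ((a i)^2 + (b i)^2)) * μ
          + (1/8) * ∑ i, ∑ j, (lam i - lam j)^2 * ((a i)^2 + (b i)^2) * ((a j)^2 + (b j)^2) :=
  ata_char_poly_general n lam br nab hbr hlc a b V hV hVunit AT hAT
end
end

section
/- Let V ∈ span(e₁, …, e_{2n}) be a unit vector of the oscillator algebra 𝔤ₙ(λ), and let W ∈ span(e₁, …, e_{2n}) satisfy g(W, φV) = 0 (in particular W = V qualifies). Then A_V W = 0, ∇_W W = 0, (∇_W A_V)W = 0, and R(V, A_V W) W = 0. -/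
open scoped RealInnerProductSpace
open Finset

noncomputable section

def oS (n : ℕ) : Set (Osc n) := Set.range (oe n) ∪ Set.range (oE n)

lemma inner_ss {m : ℕ} (a b : Fin m) :
    ⟪(EuclideanSpace.single a (1:ℝ) : EuclideanSpace ℝ (Fin m)), EuclideanSpace.single b 1⟫
      = if a = b then 1 else 0 := by
  rw [EuclideanSpace.inner_single_left, EuclideanSpace.single_apply]
  simp [eq_comm]

lemma oe_oe (n : ℕ) (i j : Fin n) : ⟪oe n i, oe n j⟫ = if i = j then 1 else 0 := by
  rw [oe, oe, inner_ss]; congr 1; simp [Fin.ext_iff]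

lemma oe_oE (n : ℕ) (i j : Fin n) : ⟪oe n i, oE n j⟫ = 0 := by
  rw [oe, oE, inner_ss, if_neg]
  intro h; have := i.2; simp [Fin.ext_iff] at h; omega

lemma oE_oe (n : ℕ) (i j : Fin n) : ⟪oE n i, oe n j⟫ = 0 := by
  rw [real_inner_comm, oe_oE]

lemma oE_oE (n : ℕ) (i j : Fin n) : ⟪oE n i, oE n j⟫ = if i = j then 1 else 0 := by
  rw [oE, oE, inner_ss]; congr 1; simp [Fin.ext_iff]

lemma oe_xi (n : ℕ) (i : Fin n) : ⟪oe n i, oXi n⟫ = 0 := by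
  rw [oe, oXi, inner_ss, if_neg]
  intro h; have := i.2; simp [Fin.ext_iff] at h; omega

lemma oE_xi (n : ℕ) (i : Fin n) : ⟪oE n i, oXi n⟫ = 0 := by
  rw [oE, oXi, inner_ss, if_neg]
  intro h; have := i.2; simp [Fin.ext_iff] at h; omega

lemma xi_xi (n : ℕ) : ⟪oXi n, oXi n⟫ = (1:ℝ) := by
  rw [oXi, inner_ss, if_pos rfl]

lemma xi_zeta (n : ℕ) : ⟪oXi n, oZeta n⟫ = 0 := by
  rw [oXi, oZeta, inner_ss, if_neg]; simp [Fin.ext_iff]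

lemma osc_span_whole (n : ℕ) (Z : Osc n) :
    Z ∈ Submodule.span ℝ (oS n ∪ {oXi n, oZeta n}) := by
  have h : Submodule.span ℝ (oS n ∪ {oXi n, oZeta n}) = ⊤ := by
    rw [eq_top_iff, ← (EuclideanSpace.basisFun (Fin (2*n+2)) ℝ).toBasis.span_eq]
    apply Submodule.span_le.2
    rintro x ⟨k, rfl⟩
    apply Submodule.subset_span
    rw [OrthonormalBasis.coe_toBasis, EuclideanSpace.basisFun_apply]
    rcases lt_or_ge k.1 n with h1 | h1
    · exact Or.inl (Or.inl ⟨⟨k.1, h1⟩, by simp [oe]⟩)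
    rcases lt_or_ge k.1 (2*n) with h2 | h2
    · refine Or.inl (Or.inr ⟨⟨k.1 - n, by omega⟩, ?_⟩)
      simp only [oE]
      exact congrArg (fun j => EuclideanSpace.single j (1:ℝ)) (Fin.ext (by simp; omega))
    rcases eq_or_lt_of_le h2 with h3 | h3
    · refine Or.inr (Or.inl ?_)
      simp only [oXi]
      exact congrArg (fun j => EuclideanSpace.single j (1:ℝ)) (Fin.ext (by simp; omega))
    · refine Or.inr (Or.inr ?_)
      simp only [oZeta, Set.mem_singleton_iff]
      have := k.2
      exact congrArg (fun j => EuclideanSpace.single j (1:ℝ)) (Fin.ext (by simp; omega))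
  rw [h]; trivial

lemma xi_perp (n : ℕ) : ∀ X ∈ Submodule.span ℝ (oS n), ⟪oXi n, X⟫ = 0 := by
  intro X hX
  induction hX using Submodule.span_induction with
  | mem x hx =>
      rcases hx with ⟨i, rfl⟩ | ⟨i, rfl⟩
      · rw [real_inner_comm]; exact oe_xi n i
      · rw [real_inner_comm]; exact oE_xi n i
  | zero => simp
  | add x y hx hy ihx ihy => simp [inner_add_right, ihx, ihy]
  | smul a x hx ih => simp [inner_smul_right, ih]

lemma br_xi (n : ℕ) (lam : Fin n → ℝ) (br : Osc n →ₗ[ℝ] Osc n →ₗ[ℝ] Osc n)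
    (hbr : IsOscBracket n lam br) :
    ∀ X ∈ Submodule.span ℝ (oS n), br X (oXi n) = 0 := by
  intro X hX
  induction hX using Submodule.span_induction with
  | mem x hx =>
      rcases hx with ⟨i, rfl⟩ | ⟨i, rfl⟩
      · exact hbr.exi i
      · exact hbr.Exi i
  | zero => simp
  | add x y hx hy ihx ihy => simp [map_add, LinearMap.add_apply, ihx, ihy]
  | smul a x hx ih => simp [map_smul, LinearMap.smul_apply, ih]

lemma phi_skew (n : ℕ) (phi : Osc n →ₗ[ℝ] Osc n) (hphi : IsPhi n phi) :
    ∀ X ∈ Submodule.span ℝ (oS n), ∀ Y ∈ Submodule.span ℝ (oS n),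
      ⟪phi X, Y⟫ = -⟪X, phi Y⟫ := by
  intro X hX
  induction hX using Submodule.span_induction with
  | mem x hx =>
      intro Y hY
      induction hY using Submodule.span_induction with
      | mem y hy =>
          rcases hx with ⟨i, rfl⟩ | ⟨i, rfl⟩ <;> rcases hy with ⟨j, rfl⟩ | ⟨j, rfl⟩
          · rw [hphi.he, hphi.he, oE_oe, oe_oE]; ring
          · rw [hphi.he, hphi.hE, oE_oE, inner_neg_right, oe_oe, neg_neg]
          · rw [hphi.hE, hphi.he, inner_neg_left, oe_oe, oE_oE]
          · rw [hphi.hE, hphi.hE, inner_neg_left, inner_neg_right, oe_oE, oE_oe]; ring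
      | zero => simp
      | add y z hy hz ihy ihz => simp only [inner_add_right, inner_add_left, map_add, ihy, ihz]; ring
      | smul a y hy ih => simp only [real_inner_smul_right, real_inner_smul_left, map_smul, ih]; ring
  | zero => intro Y hY; simp
  | add x z hx hz ihx ihz =>
      intro Y hY
      simp only [map_add, inner_add_left, inner_add_right, ihx Y hY, ihz Y hY]; ring
  | smul a x hx ih =>
      intro Y hY
      simp only [map_smul, real_inner_smul_left, real_inner_smul_right,
        ih Y hY]; ring

lemma br_span (n : ℕ) (lam : Fin n → ℝ) (br : Osc n →ₗ[ℝ] Osc n →ₗ[ℝ] Osc n)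
    (hbr : IsOscBracket n lam br) (phi : Osc n →ₗ[ℝ] Osc n) (hphi : IsPhi n phi) :
    ∀ X ∈ Submodule.span ℝ (oS n), ∀ Y ∈ Submodule.span ℝ (oS n),
      br X Y = ⟪phi X, Y⟫ • oXi n := by
  intro X hX
  induction hX using Submodule.span_induction with
  | mem x hx =>
      intro Y hY
      induction hY using Submodule.span_induction with
      | mem y hy =>
          rcases hx with ⟨i, rfl⟩ | ⟨i, rfl⟩ <;> rcases hy with ⟨j, rfl⟩ | ⟨j, rfl⟩
          · rw [hbr.ee, hphi.he, oE_oe, zero_smul]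
          · rw [hbr.eE, hphi.he, oE_oE]
            by_cases h : i = j <;> simp [h]
          · rw [hbr.anti, hbr.eE j i, hphi.hE, inner_neg_left, oe_oe]
            by_cases h : i = j
            · subst h; simp
            · simp [h, Ne.symm h]
          · rw [hbr.EE, hphi.hE, inner_neg_left, oe_oE, neg_zero, zero_smul]
      | zero => simp
      | add y z hy hz ihy ihz =>
          simp only [map_add, inner_add_right, add_smul, ihy, ihz]
      | smul a y hy ih =>
          simp only [map_smul, inner_smul_right, mul_smul, ih]
  | zero => intro Y hY; simp
  | add x z hx hz ihx ihz =>
      intro Y hY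
      simp only [map_add, LinearMap.add_apply, inner_add_left, add_smul, ihx Y hY, ihz Y hY]
  | smul a x hx ih =>
      intro Y hY
      simp only [map_smul, LinearMap.smul_apply, real_inner_smul_left,
        mul_smul, ih Y hY]

lemma zeta_skew (n : ℕ) (lam : Fin n → ℝ) (br : Osc n →ₗ[ℝ] Osc n →ₗ[ℝ] Osc n)
    (hbr : IsOscBracket n lam br) :
    ∀ X ∈ Submodule.span ℝ (oS n), ∀ Y ∈ Submodule.span ℝ (oS n),
      ⟪br (oZeta n) X, Y⟫ = -⟪br (oZeta n) Y, X⟫ := by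
  intro X hX
  induction hX using Submodule.span_induction with
  | mem x hx =>
      intro Y hY
      induction hY using Submodule.span_induction with
      | mem y hy =>
          rcases hx with ⟨i, rfl⟩ | ⟨i, rfl⟩ <;> rcases hy with ⟨j, rfl⟩ | ⟨j, rfl⟩
          · rw [hbr.zee, hbr.zee, real_inner_smul_left, real_inner_smul_left, oE_oe, oE_oe]; ring
          · rw [hbr.zee, hbr.zeE, real_inner_smul_left, inner_neg_left, real_inner_smul_left,
              oE_oE, oe_oe]
            by_cases h : i = j
            · subst h; simp
            · simp [h, Ne.symm h]
          · rw [hbr.zeE, hbr.zee, inner_neg_left, real_inner_smul_left, real_inner_smul_left,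
              oe_oe, oE_oE]
            by_cases h : i = j
            · subst h; simp
            · simp [h, Ne.symm h]
          · rw [hbr.zeE, hbr.zeE, inner_neg_left, inner_neg_left, real_inner_smul_left,
              real_inner_smul_left, oe_oE, oe_oE]; ring
      | zero => simp
      | add y z hy hz ihy ihz =>
          simp only [map_add, LinearMap.add_apply, inner_add_left, inner_add_right, ihy, ihz]; ring
      | smul a y hy ih =>
          simp only [map_smul, LinearMap.smul_apply, real_inner_smul_left, real_inner_smul_right, ih]; ring
  | zero => intro Y hY; simp
  | add x z hx hz ihx ihz =>
      intro Y hY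
      simp only [map_add, LinearMap.add_apply, inner_add_left, inner_add_right,
        ihx Y hY, ihz Y hY]; ring
  | smul a x hx ih =>
      intro Y hY
      simp only [map_smul, LinearMap.smul_apply, real_inner_smul_left, real_inner_smul_right, ih Y hY]; ring

lemma nab_span (n : ℕ) (lam : Fin n → ℝ) (br nab : Osc n →ₗ[ℝ] Osc n →ₗ[ℝ] Osc n)
    (hbr : IsOscBracket n lam br) (hlc : IsLeviCivita n br nab)
    (phi : Osc n →ₗ[ℝ] Osc n) (hphi : IsPhi n phi)
    {X Y : Osc n} (hX : X ∈ Submodule.span ℝ (oS n)) (hY : Y ∈ Submodule.span ℝ (oS n)) :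
    nab X Y = (⟪phi X, Y⟫ / 2) • oXi n := by
  apply ext_inner_right ℝ
  intro Z
  have hZ := osc_span_whole n Z
  induction hZ using Submodule.span_induction with
  | mem z hz =>
      rcases hz with hz | hz
      · have hzs : z ∈ Submodule.span ℝ (oS n) := Submodule.subset_span hz
        have hk := hlc X Y z
        rw [br_span n lam br hbr phi hphi X hX Y hY,
          br_span n lam br hbr phi hphi Y hY z hzs,
          br_span n lam br hbr phi hphi z hzs X hX,
          real_inner_smul_left, real_inner_smul_left, real_inner_smul_left,
          xi_perp n z hzs, xi_perp n X hX, xi_perp n Y hY] at hk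
        rw [real_inner_smul_left, xi_perp n z hzs]
        linarith
      · rcases hz with rfl | rfl
        · have hk := hlc X Y (oXi n)
          rw [br_span n lam br hbr phi hphi X hX Y hY, br_xi n lam br hbr Y hY,
            hbr.anti, br_xi n lam br hbr X hX, real_inner_smul_left, xi_xi] at hk
          rw [real_inner_smul_left, xi_xi]
          simp only [inner_zero_left, neg_zero, LinearMap.zero_apply] at hk ⊢
          linarith
        · have hk := hlc X Y (oZeta n)
          rw [br_span n lam br hbr phi hphi X hX Y hY,
            hbr.anti Y (oZeta n), real_inner_smul_left, xi_zeta,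
            inner_neg_left, zeta_skew n lam br hbr Y hY X hX] at hk
          rw [real_inner_smul_left, xi_zeta]
          rw [zeta_skew n lam br hbr X hX Y hY] at hk
          linarith
  | zero => simp
  | add x y hx hy ihx ihy => simp only [inner_add_right, ihx, ihy]
  | smul a x hx ih => simp only [real_inner_smul_right, ih]

/-- For a unit `V ∈ span(e₁,…,e_{2n})` and `W ∈ span(e₁,…,e_{2n})` with `g(W, φV) = 0`:
`A_V W = 0`, `∇_W W = 0`, `(∇_W A_V)W = 0`, and `R(V, A_V W) W = 0`. -/
theorem computations_kernel (n : ℕ) (hn : 1 ≤ n) (lam : Fin n → ℝ)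
    (br nab : Osc n →ₗ[ℝ] Osc n →ₗ[ℝ] Osc n)
    (hbr : IsOscBracket n lam br) (hlc : IsLeviCivita n br nab)
    (phi : Osc n →ₗ[ℝ] Osc n) (hphi : IsPhi n phi)
    (V : Osc n)
    (hV : V ∈ Submodule.span ℝ (Set.range (oe n) ∪ Set.range (oE n)))
    (hVunit : ‖V‖ = 1)
    (W : Osc n)
    (hW : W ∈ Submodule.span ℝ (Set.range (oe n) ∪ Set.range (oE n)))
    (hWperp : ⟪W, phi V⟫ = 0) :
    nomizu nab V W = 0 ∧ nab W W = 0 ∧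
    covNomizu nab V W W = 0 ∧
    curvR br nab V (nomizu nab V W) W = 0 := by
  have hVs : V ∈ Submodule.span ℝ (oS n) := hV
  have hWs : W ∈ Submodule.span ℝ (oS n) := hW
  have hphiV : ⟪phi W, V⟫ = 0 := by
    rw [phi_skew n phi hphi W hWs V hVs, hWperp, neg_zero]
  have hphiW : ⟪phi W, W⟫ = 0 := by
    have h := phi_skew n phi hphi W hWs W hWs
    have hc := real_inner_comm W (phi W)
    linarith
  have hWV : nab W V = 0 := by
    rw [nab_span n lam br nab hbr hlc phi hphi hWs hVs, hphiV]
    simp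
  have hWW : nab W W = 0 := by
    rw [nab_span n lam br nab hbr hlc phi hphi hWs hWs, hphiW]
    simp
  have h1 : nomizu nab V W = 0 := by
    rw [nomizu, hWV, neg_zero]
  refine ⟨h1, hWW, ?_, ?_⟩
  · rw [covNomizu, h1, hWW, nomizu]
    simp
  · rw [curvR, h1]
    simp
end
end
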